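/- For every fixed bandwidth vector w' ∈ ℝ₊₊^{2K}, the function f'_{w'} : ℝ₊^{2K} → ℝ₊₊^{2K}, defined componentwise by f'_{w',l}(p) = (p_l/w'_l) · d_l / (W₀ B log₂(1 + p_l/I_l(p))) when p_l ≠ 0, and f'_{w',l}(p) = (d_l · ln 2 / (W₀ B w'_l)) · I_l(p) when p_l = 0, is a standard interference function: it is positive-valued, monotone (p ≤ p̃ componentwise implies f'_{w'}(p) ≤ f'_{w'}(p̃) componentwise), and scalable (for every α > 1 and every p ∈ ℝ₊^{2K}, α·f'_{w'}(p) > f'_{w'}(α·p) componentwise). -/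

import Mathlib

/-!
Write `f'_{w',l}(p) = c_l · g(p_l, I_l(p))` with `c_l = d_l ln 2 / (W₀ B w'_l) > 0` and
`g(x, I) = x / ln(1 + x / I)`, `g(0, I) = I` (`powerPerRate`). The scalar function `g` is
positive, nondecreasing in `x` (because `ln(1 + t) / t` decreases, by concavity of `log`), strictly
increasing in `I`, and positively homogeneous. The interference `I_l` is monotone and affine with the positive constant
term `σ² / v_l`, so `I_l(α p) < α I_l(p)` for `α > 1`; together with homogeneity of `g` this gives
scalability, and monotonicity of `g` in both arguments gives monotonicity.
-/

/-- Interference at link `l` for a fixed bandwidth vector `w'`: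
`I_l(p) = ((Ṽ · diag(w') · p)_l + σ²) / v_l`. -/
noncomputable def interfW {K : ℕ} (V : Matrix (Fin (2 * K)) (Fin (2 * K)) ℝ)
    (v : Fin (2 * K) → ℝ) (σ2 : ℝ) (w' p : Fin (2 * K) → ℝ) (l : Fin (2 * K)) : ℝ :=
  ((∑ j, V l j * (w' j * p j)) + σ2) / v l

/-- The function `f'_{w'}` of the paper, defined componentwise by
`(p_l / w'_l) · d_l / (W₀ B log₂(1 + p_l / I_l(p)))` when `p_l ≠ 0`, and by the
continuous extension `(d_l ln 2 / (W₀ B w'_l)) · I_l(p)` when `p_l = 0`. -/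
noncomputable def fPrimeW {K : ℕ} (V : Matrix (Fin (2 * K)) (Fin (2 * K)) ℝ)
    (v : Fin (2 * K) → ℝ) (σ2 W0 B : ℝ) (d : Fin (2 * K) → ℝ)
    (w' p : Fin (2 * K) → ℝ) (l : Fin (2 * K)) : ℝ :=
  if p l = 0 then
    d l * Real.log 2 / (W0 * B * w' l) * interfW V v σ2 w' p l
  else
    p l / w' l * (d l / (W0 * B * Real.logb 2 (1 + p l / interfW V v σ2 w' p l)))

open Real Finset

lemma strictAntiOn_log_one_add_div_self :
    StrictAntiOn (fun t : ℝ => log (1 + t) / t) (Set.Ioi 0) := by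
  intro s (hs : 0 < s) t (ht : 0 < t) hst
  have key := strictConcaveOn_log_Ioi.secant_strict_mono (a := 1) (x := 1 + s) (y := 1 + t)
    (by norm_num) (by simp only [Set.mem_Ioi]; linarith) (by simp only [Set.mem_Ioi]; linarith)
    (by linarith) (by linarith) (by linarith)
  simpa using key

noncomputable def powerPerRate (x I : ℝ) : ℝ :=
  if x = 0 then I else x / log (1 + x / I)

section powerPerRate

variable {x y I J : ℝ}

lemma powerPerRate_pos (hx : 0 ≤ x) (hI : 0 < I) : 0 < powerPerRate x I := by
  unfold powerPerRate
  split_ifs with h0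
  · exact hI
  · have hx' : 0 < x := lt_of_le_of_ne hx (Ne.symm h0)
    have : 0 < log (1 + x / I) := log_pos (by simp only [lt_add_iff_pos_right]; positivity)
    positivity

lemma le_powerPerRate (hx : 0 ≤ x) (hI : 0 < I) : I ≤ powerPerRate x I := by
  unfold powerPerRate
  split_ifs with h0
  · rfl
  · have hx' : 0 < x := lt_of_le_of_ne hx (Ne.symm h0)
    have hlog_pos : 0 < log (1 + x / I) := log_pos (by simp only [lt_add_iff_pos_right]; positivity)
    have hlog_le : log (1 + x / I) ≤ x / I := by
      simpa using log_le_sub_one_of_pos (x := 1 + x / I) (by positivity)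
    rw [le_div_iff₀ hlog_pos]
    calc I * log (1 + x / I) ≤ I * (x / I) := by gcongr
      _ = x := by field_simp

lemma powerPerRate_mono_left (hx : 0 ≤ x) (hxy : x ≤ y) (hI : 0 < I) :
    powerPerRate x I ≤ powerPerRate y I := by
  rcases hx.eq_or_lt with rfl | hx'
  · simpa [powerPerRate] using le_powerPerRate hxy hI
  have hy' : 0 < y := hx'.trans_le hxy
  have hslope : log (1 + y / I) / (y / I) ≤ log (1 + x / I) / (x / I) :=
    strictAntiOn_log_one_add_div_self.antitoneOn (Set.mem_Ioi.2 (by positivity))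
      (Set.mem_Ioi.2 (by positivity)) (by gcongr)
  rw [div_le_div_iff₀ (by positivity) (by positivity)] at hslope
  have hlx : 0 < log (1 + x / I) := log_pos (by simp only [lt_add_iff_pos_right]; positivity)
  have hly : 0 < log (1 + y / I) := log_pos (by simp only [lt_add_iff_pos_right]; positivity)
  rw [powerPerRate, powerPerRate, if_neg hx'.ne', if_neg hy'.ne', div_le_div_iff₀ hlx hly]
  calc x * log (1 + y / I) = I * (log (1 + y / I) * (x / I)) := by field_simp
    _ ≤ I * (log (1 + x / I) * (y / I)) := by gcongr
    _ = y * log (1 + x / I) := by field_simp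

lemma powerPerRate_strictMono_right (hx : 0 ≤ x) (hI : 0 < I) (hIJ : I < J) :
    powerPerRate x I < powerPerRate x J := by
  unfold powerPerRate
  split_ifs with h0
  · exact hIJ
  · have hx' : 0 < x := lt_of_le_of_ne hx (Ne.symm h0)
    have hJ : 0 < J := hI.trans hIJ
    refine div_lt_div_of_pos_left hx' (log_pos ?_) (log_lt_log (by positivity) ?_)
    · simp only [lt_add_iff_pos_right]; positivity
    · gcongr

lemma powerPerRate_mono (hx : 0 ≤ x) (hxy : x ≤ y) (hI : 0 < I) (hIJ : I ≤ J) :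
    powerPerRate x I ≤ powerPerRate y J := by
  refine (powerPerRate_mono_left hx hxy hI).trans ?_
  rcases hIJ.eq_or_lt with rfl | hIJ
  · rfl
  · exact (powerPerRate_strictMono_right (hx.trans hxy) hI hIJ).le

lemma powerPerRate_mul {α : ℝ} (hα : α ≠ 0) :
    powerPerRate (α * x) (α * I) = α * powerPerRate x I := by
  unfold powerPerRate
  rw [mul_div_mul_left x I hα]
  split_ifs with h h' h' <;> simp_all [mul_div_assoc]

end powerPerRate

section interfW

variable {K : ℕ} {V : Matrix (Fin (2 * K)) (Fin (2 * K)) ℝ} {v : Fin (2 * K) → ℝ} {σ2 : ℝ}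
  {w' p q : Fin (2 * K) → ℝ}

lemma interfW_pos (hV : ∀ i j, 0 ≤ V i j) (hv : ∀ i, 0 < v i) (hσ2 : 0 < σ2)
    (hw' : ∀ i, 0 < w' i) (hp : ∀ i, 0 ≤ p i) (l : Fin (2 * K)) :
    0 < interfW V v σ2 w' p l := by
  have : 0 ≤ ∑ j, V l j * (w' j * p j) :=
    sum_nonneg fun j _ => mul_nonneg (hV l j) (mul_nonneg (hw' j).le (hp j))
  have := hv l
  unfold interfW
  positivity

lemma interfW_mono (hV : ∀ i j, 0 ≤ V i j) (hv : ∀ i, 0 < v i) (hw' : ∀ i, 0 < w' i)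
    (hpq : p ≤ q) (l : Fin (2 * K)) :
    interfW V v σ2 w' p l ≤ interfW V v σ2 w' q l := by
  unfold interfW
  gcongr with j
  · exact (hv l).le
  · exact hV l j
  · exact (hw' j).le
  · exact hpq j

lemma interfW_smul_lt_mul (hv : ∀ i, 0 < v i) (hσ2 : 0 < σ2) {α : ℝ} (hα : 1 < α)
    (l : Fin (2 * K)) :
    interfW V v σ2 w' (α • p) l < α * interfW V v σ2 w' p l := by
  have hsum : ∑ j, V l j * (w' j * (α • p) j) = α * ∑ j, V l j * (w' j * p j) := by
    rw [mul_sum]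
    exact sum_congr rfl fun j _ => by rw [Pi.smul_apply, smul_eq_mul]; ring
  unfold interfW
  rw [hsum, ← mul_div_assoc, div_lt_div_iff_of_pos_right (hv l)]
  nlinarith

end interfW

lemma fPrimeW_eq_mul_powerPerRate {K : ℕ} (V : Matrix (Fin (2 * K)) (Fin (2 * K)) ℝ)
    (v : Fin (2 * K) → ℝ) (σ2 W0 B : ℝ) (d w' p : Fin (2 * K) → ℝ) (l : Fin (2 * K)) :
    fPrimeW V v σ2 W0 B d w' p l =
      d l * log 2 / (W0 * B * w' l) * powerPerRate (p l) (interfW V v σ2 w' p l) := by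
  unfold fPrimeW powerPerRate
  split_ifs
  · rfl
  · have : log 2 ≠ 0 := (log_pos one_lt_two).ne'
    rw [logb]
    field_simp

theorem fPrimeW_is_sif_general (K : ℕ)
    (V : Matrix (Fin (2 * K)) (Fin (2 * K)) ℝ) (hV : ∀ i j, 0 ≤ V i j)
    (v : Fin (2 * K) → ℝ) (hv : ∀ i, 0 < v i)
    (σ2 : ℝ) (hσ2 : 0 < σ2) (W0 B : ℝ) (hW0 : 0 < W0) (hB : 0 < B)
    (d : Fin (2 * K) → ℝ) (hd : ∀ i, 0 < d i)
    (w' : Fin (2 * K) → ℝ) (hw' : ∀ i, 0 < w' i) :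
    (∀ p : Fin (2 * K) → ℝ, (∀ i, 0 ≤ p i) →
      ∀ l, 0 < fPrimeW V v σ2 W0 B d w' p l) ∧
    (∀ p p2 : Fin (2 * K) → ℝ, (∀ i, 0 ≤ p i) → p ≤ p2 →
      ∀ l, fPrimeW V v σ2 W0 B d w' p l ≤ fPrimeW V v σ2 W0 B d w' p2 l) ∧
    (∀ α : ℝ, 1 < α → ∀ p : Fin (2 * K) → ℝ, (∀ i, 0 ≤ p i) →
      ∀ l, fPrimeW V v σ2 W0 B d w' (α • p) l < α * fPrimeW V v σ2 W0 B d w' p l) := by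
  have hc : ∀ l, 0 < d l * log 2 / (W0 * B * w' l) := fun l => by
    have := hd l; have := hw' l; have := log_pos one_lt_two; positivity
  simp only [fPrimeW_eq_mul_powerPerRate]
  refine ⟨fun p hp l => mul_pos (hc l) (powerPerRate_pos (hp l) (interfW_pos hV hv hσ2 hw' hp l)),
    fun p q hp hpq l => ?_, fun α hα p hp l => ?_⟩
  · exact mul_le_mul_of_nonneg_left (powerPerRate_mono (hp l) (hpq l)
      (interfW_pos hV hv hσ2 hw' hp l) (interfW_mono hV hv hw' hpq l)) (hc l).le
  · have hα0 : 0 < α := one_pos.trans hα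
    have hαp : ∀ i, 0 ≤ (α • p) i := fun i => mul_nonneg hα0.le (hp i)
    calc _ < d l * log 2 / (W0 * B * w' l) *
          powerPerRate ((α • p) l) (α * interfW V v σ2 w' p l) :=
          mul_lt_mul_of_pos_left (powerPerRate_strictMono_right (hαp l)
            (interfW_pos hV hv hσ2 hw' hαp l) (interfW_smul_lt_mul hv hσ2 hα l)) (hc l)
      _ = _ := by rw [Pi.smul_apply, smul_eq_mul, powerPerRate_mul hα0.ne']; ring

/-- Lemma 2 of the paper: For every fixed positive bandwidth vector
`w'`, the function `p ↦ f'_{w'}(p)` is a standard interference function: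
positive-valued, monotone, and scalable on the nonnegative orthant. -/
theorem fPrimeW_is_sif (K : ℕ) (hK : 1 ≤ K)
    (V : Matrix (Fin (2 * K)) (Fin (2 * K)) ℝ) (hV : ∀ i j, 0 ≤ V i j)
    (v : Fin (2 * K) → ℝ) (hv : ∀ i, 0 < v i)
    (σ2 : ℝ) (hσ2 : 0 < σ2) (W0 B : ℝ) (hW0 : 0 < W0) (hB : 0 < B)
    (d : Fin (2 * K) → ℝ) (hd : ∀ i, 0 < d i)
    (w' : Fin (2 * K) → ℝ) (hw' : ∀ i, 0 < w' i) :
    (∀ p : Fin (2 * K) → ℝ, (∀ i, 0 ≤ p i) →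
      ∀ l, 0 < fPrimeW V v σ2 W0 B d w' p l) ∧
    (∀ p p2 : Fin (2 * K) → ℝ, (∀ i, 0 ≤ p i) → p ≤ p2 →
      ∀ l, fPrimeW V v σ2 W0 B d w' p l ≤ fPrimeW V v σ2 W0 B d w' p2 l) ∧
    (∀ α : ℝ, 1 < α → ∀ p : Fin (2 * K) → ℝ, (∀ i, 0 ≤ p i) →
      ∀ l, fPrimeW V v σ2 W0 B d w' (α • p) l < α * fPrimeW V v σ2 W0 B d w' p l) :=
  fPrimeW_is_sif_general K V hV v hv σ2 hσ2 W0 B hW0 hB d hd w' hw'
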